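/- Let p be a prime and n = u + v where u and v are distinct powers of p. For any composition α of n corresponding to the binary string a_1⋯a_n (a_j = 1 iff j ∈ D(α)∪{n}): the ribbon number r_α ≡ (-1)^{ℓ(α)} (mod p) if a_u = a_v = 1; r_α ≡ (-1)^{ℓ(α)-1} (mod p) if a_u = a_v = 0; and r_α ≡ 0 (mod p) otherwise. -/

import Mathlib

/-- Permutations of `{1, ..., n}`, modeled as functions `ℕ → ℕ` that restrict to a
bijection of `{1, ..., n}` and fix everything else. -/
def PermsA (n : ℕ) : Set (ℕ → ℕ) :=
  {w | Set.BijOn w (Set.Icc 1 n) (Set.Icc 1 n) ∧ ∀ i ∉ Set.Icc 1 n, w i = i}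

/-- The descent set `D(w) = {i ∈ [n-1] : w(i) > w(i+1)}`. -/
def DesA (n : ℕ) (w : ℕ → ℕ) : Set ℕ :=
  {i | 1 ≤ i ∧ i < n ∧ w (i + 1) < w i}

/-- The descent set `D(α) = {α₁, α₁+α₂, …, α₁+⋯+α_{ℓ-1}}` of a composition `α` of `n`. -/
def DsetA {n : ℕ} (α : Composition n) : Set ℕ :=
  {m | ∃ i, 0 < i ∧ i < α.length ∧ α.sizeUpTo i = m}

/-- The type A ribbon number `r_α = |{w ∈ S_n : D(w) = D(α)}|`. -/
noncomputable def ribbonA {n : ℕ} (α : Composition n) : ℕ :=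
  Set.ncard {w ∈ PermsA n | DesA n w = DsetA α}

lemma choosePowZero {p : ℕ} (hp : p.Prime) (c s : ℕ) (h0 : s ≠ 0) (h1 : s ≠ p ^ c) :
    ((p ^ c).choose s : ZMod p) = 0 := by
  rw [ZMod.natCast_eq_zero_iff]
  exact Nat.Prime.dvd_choose_pow hp h0 h1

lemma chooseSumOne {p a b : ℕ} (hp : p.Prime) (hab : a ≠ b) :
    (((p ^ a + p ^ b).choose (p ^ a)) : ZMod p) = 1 := by
  have hne : p ^ a ≠ p ^ b := fun h => hab (Nat.pow_right_injective hp.two_le h)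
  have hpos : p ^ a ≠ 0 := (Nat.pow_pos hp.pos).ne'
  rw [Nat.add_choose_eq]
  push_cast
  rw [Finset.sum_eq_single (p ^ a, 0)]
  · simp
  · rintro ⟨i, j⟩ hij hne2
    rw [Finset.HasAntidiagonal.mem_antidiagonal] at hij
    by_cases hi : i = p ^ a
    · exfalso; apply hne2; subst hi; simp_all
    · by_cases hi0 : i = 0
      · subst hi0
        have hj : j = p ^ a := by simpa using hij
        subst hj
        have : ((p ^ b).choose (p ^ a) : ZMod p) = 0 := choosePowZero hp b _ hpos hne
        simp [this]
      · have : ((p ^ a).choose i : ZMod p) = 0 := choosePowZero hp a i hi0 hi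
        simp [this]
  · intro h
    exfalso; apply h; rw [Finset.HasAntidiagonal.mem_antidiagonal]; simp

lemma chooseSumZero {p a b s : ℕ} (hp : p.Prime) (h0 : s ≠ 0) (hu : s ≠ p ^ a)
    (hv : s ≠ p ^ b) (hn : s ≠ p ^ a + p ^ b) :
    (((p ^ a + p ^ b).choose s) : ZMod p) = 0 := by
  rw [Nat.add_choose_eq]
  push_cast
  apply Finset.sum_eq_zero
  rintro ⟨i, j⟩ hij
  rw [Finset.HasAntidiagonal.mem_antidiagonal] at hij
  by_cases hi0 : i = 0
  · have : ((p ^ b).choose j : ZMod p) = 0 := by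
      apply choosePowZero hp b j <;> omega
    simp [this]
  · by_cases hi : i = p ^ a
    · have : ((p ^ b).choose j : ZMod p) = 0 := by
        apply choosePowZero hp b j <;> omega
      simp [this]
    · have : ((p ^ a).choose i : ZMod p) = 0 := choosePowZero hp a i hi0 hi
      simp [this]

/-- chain binomial product -/
noncomputable def cb (m : ℕ) (S : Finset ℕ) : ℕ :=
  if h : S.Nonempty then
    Nat.choose m (S.max' h) * cb (S.max' h) (S.erase (S.max' h))
  else 1
termination_by S.card
decreasing_by exact Finset.card_erase_lt_of_mem (S.max'_mem h)

lemma cb_empty (m : ℕ) : cb m ∅ = 1 := by rw [cb]; simp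

lemma cb_nonempty (m : ℕ) {S : Finset ℕ} (h : S.Nonempty) :
    cb m S = Nat.choose m (S.max' h) * cb (S.max' h) (S.erase (S.max' h)) := by
  rw [cb]; simp [h]

def OKset (m : ℕ) (V : Finset ℕ) (S : Finset ℕ) : Set (ℕ → ℕ) :=
  {w | Set.BijOn w (Set.Icc 1 m) ↑V ∧ (∀ i ∉ Set.Icc 1 m, w i = i) ∧
       ∀ i, 1 ≤ i → i < m → i ∉ S → w i < w (i + 1)}

lemma OKset_finite (m : ℕ) (V S : Finset ℕ) : (OKset m V S).Finite := by
  classical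
  set B := m + V.sup id with hB
  have himg : (fun (w : ℕ → ℕ) => fun j : Fin (m+1) => w j) '' OKset m V S ⊆
      Set.pi Set.univ (fun _ : Fin (m+1) => Set.Iic B) := by
    rintro g ⟨w, hw, rfl⟩ j _
    rcases hw with ⟨hbij, hfix, -⟩
    by_cases hj : (j : ℕ) ∈ Set.Icc 1 m
    · have : w j ∈ (V : Set ℕ) := hbij.mapsTo hj
      have : w j ≤ V.sup id := Finset.le_sup (f := id) (by exact_mod_cast this)
      simp only [Set.mem_Iic]; omega
    · have := hfix j hj
      simp only [Set.mem_Iic, this]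
      have := j.isLt; simp only [Set.mem_Icc] at hj; omega
  have hfin : ((fun (w : ℕ → ℕ) => fun j : Fin (m+1) => w j) '' OKset m V S).Finite :=
    Set.Finite.subset (Set.Finite.pi (fun _ => Set.finite_Iic B)) himg
  apply Set.Finite.of_finite_image hfin
  intro w₁ h₁ w₂ h₂ he
  funext i
  by_cases hi : i ≤ m
  · exact congrFun he ⟨i, by omega⟩
  · rw [h₁.2.1 i (by simp [Set.mem_Icc]; omega), h₂.2.1 i (by simp [Set.mem_Icc]; omega)]

lemma enum_eq {a k : ℕ} {V : Finset ℕ} (h : V.card = k) {f : ℕ → ℕ}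
    (hmap : ∀ i, a ≤ i → i < a + k → f i ∈ V)
    (hmono : ∀ i, a ≤ i → i + 1 < a + k → f i < f (i + 1)) :
    ∀ i, ∀ hi1 : a ≤ i, ∀ hi2 : i < a + k, f i = V.orderEmbOfFin h ⟨i - a, by omega⟩ := by
  have key : ∀ j, j < k → ∀ i, i < j → f (a + i) < f (a + j) := by
    intro j
    induction j with
    | zero => omega
    | succ j ih =>
      intro hj i hi
      have hstep : f (a + j) < f (a + (j + 1)) := by
        have := hmono (a + j) (by omega) (by omega)
        have he : a + (j + 1) = a + j + 1 := by omega
        rw [he]; exact this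
      rcases Nat.lt_or_ge i j with hij | hij
      · exact lt_trans (ih (by omega) i hij) hstep
      · have : i = j := by omega
        rw [this]; exact hstep
  have gmono : StrictMono (fun j : Fin k => f (a + j)) := by
    intro x y hxy
    exact key y y.isLt x hxy
  have gmem : ∀ j : Fin k, f (a + (j : ℕ)) ∈ V := fun j => hmap _ (by omega) (by
    have := j.isLt; omega)
  have huniq := Finset.orderEmbOfFin_unique h gmem gmono
  intro i hi1 hi2
  have h2 : a + (i - a) = i := by omega
  have := congrFun huniq ⟨i - a, by omega⟩
  simpa [h2] using this

/-- extend `w` by the increasing enumeration of `V` on `[a, a+k)` -/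
noncomputable def extFun (a k : ℕ) (V : Finset ℕ) (h : V.card = k) (w : ℕ → ℕ) : ℕ → ℕ :=
  fun i => if hi : a ≤ i ∧ i < a + k then V.orderEmbOfFin h ⟨i - a, by omega⟩ else w i

lemma extFun_mem_of_le {a k : ℕ} {V : Finset ℕ} {h : V.card = k} {w : ℕ → ℕ} {i : ℕ}
    (hi : a ≤ i) (hi2 : i < a + k) : extFun a k V h w i ∈ V := by
  rw [extFun, dif_pos ⟨hi, hi2⟩]; exact Finset.orderEmbOfFin_mem V h _

lemma extFun_of_not {a k : ℕ} {V : Finset ℕ} {h : V.card = k} {w : ℕ → ℕ} {i : ℕ}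
    (hi : ¬(a ≤ i ∧ i < a + k)) : extFun a k V h w i = w i := by
  rw [extFun, dif_neg hi]

lemma OKset_empty (m : ℕ) (V : Finset ℕ) (h : V.card = m) :
    OKset m V ∅ = {extFun 1 m V h id} := by
  have hrange : ∀ y ∈ V, ∃ j : Fin m, V.orderEmbOfFin h j = y := by
    intro y hy
    have : y ∈ Set.range (V.orderEmbOfFin h) := by
      rw [Finset.range_orderEmbOfFin]; exact_mod_cast hy
    exact this
  ext w
  simp only [Set.mem_singleton_iff]
  constructor
  · rintro ⟨hbij, hfix, hmono⟩
    funext i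
    by_cases hi : 1 ≤ i ∧ i < 1 + m
    · rw [extFun, dif_pos hi]
      exact enum_eq h
        (fun j hj1 hj2 => by exact_mod_cast hbij.mapsTo (by simp [Set.mem_Icc]; omega))
        (fun j hj1 hj2 => hmono j hj1 (by omega) (by simp)) i hi.1 hi.2
    · rw [extFun, dif_neg hi, hfix i (by simp [Set.mem_Icc]; omega)]; rfl
  · rintro rfl
    refine ⟨⟨?_, ?_, ?_⟩, ?_, ?_⟩
    · intro i hi
      simp only [Set.mem_Icc] at hi
      exact_mod_cast extFun_mem_of_le (h := h) hi.1 (by omega)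
    · intro i hi j hj he
      simp only [Set.mem_Icc] at hi hj
      simp only [extFun] at he
      rw [dif_pos (show 1 ≤ i ∧ i < 1 + m from ⟨hi.1, by omega⟩),
          dif_pos (show 1 ≤ j ∧ j < 1 + m from ⟨hj.1, by omega⟩)] at he
      have := (V.orderEmbOfFin h).injective (by exact_mod_cast he)
      have := Fin.mk.injEq (i - 1) _ (j - 1) _ ▸ this
      omega
    · intro y hy
      obtain ⟨j, hj⟩ := hrange y (by exact_mod_cast hy)
      refine ⟨1 + j, by simp [Set.mem_Icc]; omega, ?_⟩
      rw [extFun, dif_pos ⟨by omega, by omega⟩]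
      simpa using hj
    · intro i hi
      simp only [Set.mem_Icc, not_and, not_le] at hi
      rw [extFun, dif_neg (by omega)]; rfl
    · intro i h1 h2 _
      simp only [extFun]
      rw [dif_pos (show 1 ≤ i ∧ i < 1 + m from ⟨h1, by omega⟩),
          dif_pos (show 1 ≤ i + 1 ∧ i + 1 < 1 + m from ⟨by omega, by omega⟩)]
      apply (V.orderEmbOfFin h).strictMono
      exact Fin.mk_lt_mk.mpr (by omega)

lemma Tset_ncard (m s : ℕ) (V W S : Finset ℕ) (hVm : V.card = m) (hWV : W ⊆ V)
    (hWs : W.card = s) (hsm : s < m) (hsS : s ∈ S) (hmax : ∀ t ∈ S, t ≤ s)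
    (hdiff : (V \ W).card = m - s) :
    ({w ∈ OKset m V S | w '' Set.Icc 1 s = ↑W}).ncard = (OKset s W (S.erase s)).ncard := by
  set E := extFun (s+1) (m-s) (V \ W) hdiff with hE
  have hEapp : ∀ (w : ℕ → ℕ) (i : ℕ), ¬(s + 1 ≤ i ∧ i < s + 1 + (m - s)) → E w i = w i :=
    fun w i hi => extFun_of_not hi
  have hrange : ∀ y ∈ V \ W, ∃ j : Fin (m - s), (V \ W).orderEmbOfFin hdiff j = y := by
    intro y hy
    have : y ∈ Set.range ((V \ W).orderEmbOfFin hdiff) := by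
      rw [Finset.range_orderEmbOfFin]; exact_mod_cast hy
    exact this
  have himg : {w ∈ OKset m V S | w '' Set.Icc 1 s = ↑W} = E '' OKset s W (S.erase s) := by
    ext w
    constructor
    · rintro ⟨⟨hbij, hfix, hmono⟩, hW⟩
      -- the restriction
      set w' : ℕ → ℕ := fun i => if 1 ≤ i ∧ i ≤ s then w i else i with hw'
      have hw'eq : ∀ i, 1 ≤ i → i ≤ s → w' i = w i := fun i h1 h2 => if_pos ⟨h1, h2⟩
      have hw'id : ∀ i, ¬(1 ≤ i ∧ i ≤ s) → w' i = i := fun i h => if_neg h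
      have hwnotW : ∀ i, s + 1 ≤ i → i ≤ m → w i ∉ W := by
        intro i h1 h2 hmem
        have : (w i : ℕ) ∈ w '' Set.Icc 1 s := by rw [hW]; exact_mod_cast hmem
        obtain ⟨j, hj, hji⟩ := this
        simp only [Set.mem_Icc] at hj
        have := hbij.injOn (show j ∈ Set.Icc 1 m by simp [Set.mem_Icc]; omega)
          (show i ∈ Set.Icc 1 m by simp [Set.mem_Icc]; omega) hji
        omega
      refine ⟨w', ⟨⟨?_, ?_, ?_⟩, ?_, ?_⟩, ?_⟩
      · intro i hi
        simp only [Set.mem_Icc] at hi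
        rw [hw'eq i hi.1 hi.2, ← hW]
        exact ⟨i, by simp [Set.mem_Icc]; omega, rfl⟩
      · intro i hi j hj he
        simp only [Set.mem_Icc] at hi hj
        rw [hw'eq i hi.1 hi.2, hw'eq j hj.1 hj.2] at he
        exact hbij.injOn (by simp [Set.mem_Icc]; omega) (by simp [Set.mem_Icc]; omega) he
      · intro y hy
        have : y ∈ w '' Set.Icc 1 s := by rw [hW]; exact_mod_cast hy
        obtain ⟨j, hj, hji⟩ := this
        simp only [Set.mem_Icc] at hj
        exact ⟨j, by simp [Set.mem_Icc]; omega, by rw [hw'eq j hj.1 hj.2]; exact hji⟩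
      · intro i hi
        simp only [Set.mem_Icc] at hi
        exact hw'id i (by omega)
      · intro i h1 h2 hiS
        have hiS' : i ∉ S := fun hmem => hiS (Finset.mem_erase.mpr ⟨by omega, hmem⟩)
        rw [hw'eq i h1 (by omega), hw'eq (i+1) (by omega) (by omega)]
        exact hmono i h1 (by omega) hiS'
      · -- E w' = w
        funext i
        by_cases hi : s + 1 ≤ i ∧ i < s + 1 + (m - s)
        · rw [hE, extFun, dif_pos hi]
          refine (enum_eq hdiff ?_ ?_ i hi.1 hi.2).symm
          · intro j hj1 hj2
            rw [Finset.mem_sdiff]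
            refine ⟨by exact_mod_cast hbij.mapsTo (by simp [Set.mem_Icc]; omega), ?_⟩
            exact hwnotW j hj1 (by omega)
          · intro j hj1 hj2
            exact hmono j (by omega) (by omega) (fun hmem => by have := hmax j hmem; omega)
        · rw [hEapp w' i hi]
          by_cases hi2 : 1 ≤ i ∧ i ≤ s
          · exact hw'eq i hi2.1 hi2.2
          · rw [hw'id i hi2]
            exact (hfix i (by simp [Set.mem_Icc]; omega)).symm
    · rintro ⟨w', ⟨hbij, hfix, hmono⟩, rfl⟩
      have hElow : ∀ i, i ≤ s → E w' i = w' i := fun i h => hEapp w' i (by omega)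
      have hEhigh : ∀ i, ¬(s + 1 ≤ i ∧ i < s + 1 + (m - s)) → E w' i = w' i := hEapp w'
      have hEmem : ∀ i, s + 1 ≤ i → i < s + 1 + (m - s) → E w' i ∈ V \ W := by
        intro i h1 h2
        exact extFun_mem_of_le (h := hdiff) h1 h2
      constructor
      · refine ⟨⟨?_, ?_, ?_⟩, ?_, ?_⟩
        · intro i hi
          simp only [Set.mem_Icc] at hi
          by_cases h : i ≤ s
          · rw [hElow i h]
            exact_mod_cast hWV (by exact_mod_cast hbij.mapsTo (by simp [Set.mem_Icc]; omega))
          · have := hEmem i (by omega) (by omega)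
            rw [Finset.mem_sdiff] at this
            exact_mod_cast this.1
        · intro i hi j hj he
          simp only [Set.mem_Icc] at hi hj
          by_cases h1 : i ≤ s <;> by_cases h2 : j ≤ s
          · rw [hElow i h1, hElow j h2] at he
            exact hbij.injOn (by simp [Set.mem_Icc]; omega) (by simp [Set.mem_Icc]; omega) he
          · exfalso
            have hWi : E w' i ∈ W := by
              rw [hElow i h1]
              exact_mod_cast hbij.mapsTo (by simp [Set.mem_Icc]; omega)
            have := hEmem j (by omega) (by omega)
            rw [Finset.mem_sdiff, ← he] at this
            exact this.2 hWi
          · exfalso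
            have hWj : E w' j ∈ W := by
              rw [hElow j h2]
              exact_mod_cast hbij.mapsTo (by simp [Set.mem_Icc]; omega)
            have := hEmem i (by omega) (by omega)
            rw [Finset.mem_sdiff, he] at this
            exact this.2 hWj
          · rw [hE, extFun, dif_pos (show s+1 ≤ i ∧ i < s+1+(m-s) by omega),
              extFun, dif_pos (show s+1 ≤ j ∧ j < s+1+(m-s) by omega)] at he
            have := ((V \ W).orderEmbOfFin hdiff).injective (by exact_mod_cast he)
            have := Fin.mk.injEq (i - (s+1)) _ (j - (s+1)) _ ▸ this
            omega
        · intro y hy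
          by_cases h : y ∈ W
          · obtain ⟨j, hj, hji⟩ := hbij.surjOn (show y ∈ (W : Set ℕ) by exact_mod_cast h)
            simp only [Set.mem_Icc] at hj
            exact ⟨j, by simp [Set.mem_Icc]; omega, by rw [hElow j hj.2]; exact hji⟩
          · obtain ⟨j, hj⟩ := hrange y (Finset.mem_sdiff.mpr ⟨by exact_mod_cast hy, h⟩)
            refine ⟨s + 1 + j, by simp [Set.mem_Icc]; have := j.isLt; omega, ?_⟩
            rw [hE, extFun, dif_pos (show s+1 ≤ s+1+(j:ℕ) ∧ s+1+(j:ℕ) < s+1+(m-s)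
              by have := j.isLt; omega)]
            simpa using hj
        · intro i hi
          simp only [Set.mem_Icc] at hi
          rw [hEhigh i (by omega)]
          exact hfix i (by simp [Set.mem_Icc]; omega)
        · intro i h1 h2 hiS
          have hine : i ≠ s := fun h => hiS (h ▸ hsS)
          by_cases h : i + 1 ≤ s
          · rw [hElow i (by omega), hElow (i+1) h]
            exact hmono i h1 (by omega) (fun hmem => hiS (Finset.mem_of_mem_erase hmem))
          · have hige : s + 1 ≤ i := by omega
            rw [hE, extFun, dif_pos (show s+1 ≤ i ∧ i < s+1+(m-s) by omega),
              extFun, dif_pos (show s+1 ≤ i+1 ∧ i+1 < s+1+(m-s) by omega)]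
            apply ((V \ W).orderEmbOfFin hdiff).strictMono
            exact Fin.mk_lt_mk.mpr (by omega)
      · -- image over Icc 1 s equals W
        have : E w' '' Set.Icc 1 s = w' '' Set.Icc 1 s := by
          apply Set.image_congr
          intro i hi
          simp only [Set.mem_Icc] at hi
          exact hElow i hi.2
        rw [this, hbij.image_eq]
  rw [himg]
  apply Set.ncard_image_of_injOn
  intro w₁ h₁ w₂ h₂ he
  funext i
  by_cases hi : s + 1 ≤ i ∧ i < s + 1 + (m - s)
  · rw [h₁.2.1 i (by simp [Set.mem_Icc]; omega), h₂.2.1 i (by simp [Set.mem_Icc]; omega)]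
  · have := congrFun he i
    rwa [hEapp w₁ i hi, hEapp w₂ i hi] at this

lemma ncard_biUnion_finset {α β : Type*} (I : Finset α) (T : α → Set β)
    (hfin : ∀ i ∈ I, (T i).Finite)
    (hdisj : ∀ i ∈ I, ∀ j ∈ I, i ≠ j → Disjoint (T i) (T j)) :
    (⋃ i ∈ I, T i).ncard = ∑ i ∈ I, (T i).ncard := by
  classical
  induction I using Finset.induction with
  | empty => simp
  | insert a I' hnot ih =>
    rw [Finset.sum_insert hnot]
    have hcup : (⋃ i ∈ insert a I', T i) = T a ∪ ⋃ i ∈ I', T i := by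
      simp [Set.biUnion_insert]
    have hTa : (T a).Finite := hfin a (Finset.mem_insert_self a I')
    have hTU : (⋃ i ∈ I', T i).Finite := Set.Finite.biUnion I'.finite_toSet
      (fun i hi => hfin i (Finset.mem_insert_of_mem hi))
    have hd : Disjoint (T a) (⋃ i ∈ I', T i) := by
      apply Set.disjoint_iUnion₂_right.mpr
      intro i hi
      exact hdisj a (Finset.mem_insert_self a I') i (Finset.mem_insert_of_mem hi)
        (fun h => hnot (h ▸ hi))
    rw [hcup, Set.ncard_union_eq hd hTa hTU,
      ih (fun i hi => hfin i (Finset.mem_insert_of_mem hi))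
        (fun i hi j hj hij => hdisj i (Finset.mem_insert_of_mem hi) j
          (Finset.mem_insert_of_mem hj) hij)]

lemma okCount : ∀ (c : ℕ) (S : Finset ℕ) (m : ℕ) (V : Finset ℕ), S.card = c → V.card = m →
    (∀ t ∈ S, 0 < t ∧ t < m) → (OKset m V S).ncard = cb m S := by
  intro c
  induction c with
  | zero =>
    intro S m V hSc hVc _
    rw [Finset.card_eq_zero] at hSc
    subst hSc
    rw [OKset_empty m V hVc, cb_empty, Set.ncard_singleton]
  | succ c ih =>
    intro S m V hSc hVc hrange
    classical
    have hne : S.Nonempty := Finset.card_pos.mp (by omega)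
    set s := S.max' hne with hs
    have hsS : s ∈ S := S.max'_mem hne
    have hmax : ∀ t ∈ S, t ≤ s := fun t ht => S.le_max' t ht
    have hs1 : 0 < s := (hrange s hsS).1
    have hsm : s < m := (hrange s hsS).2
    -- partition
    have hpart : OKset m V S =
        ⋃ W ∈ V.powersetCard s, {w ∈ OKset m V S | w '' Set.Icc 1 s = ↑W} := by
      ext w
      simp only [Set.mem_iUnion, exists_prop]
      constructor
      · intro hw
        refine ⟨(Finset.Icc 1 s).image w, ?_, hw, ?_⟩
        · rw [Finset.mem_powersetCard]
          constructor
          · intro y hy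
            rw [Finset.mem_image] at hy
            obtain ⟨i, hi, rfl⟩ := hy
            rw [Finset.mem_Icc] at hi
            exact_mod_cast hw.1.mapsTo (by simp [Set.mem_Icc]; omega)
          · rw [Finset.card_image_of_injOn, Nat.card_Icc]
            · omega
            · intro i hi j hj he
              rw [Finset.coe_Icc, Set.mem_Icc] at hi hj
              exact hw.1.injOn (by simp [Set.mem_Icc]; omega) (by simp [Set.mem_Icc]; omega) he
        · rw [Finset.coe_image, Finset.coe_Icc]
      · rintro ⟨W, _, hw, _⟩
        exact hw
    rw [hpart, ncard_biUnion_finset]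
    · have hsum : ∀ W ∈ V.powersetCard s,
          ({w ∈ OKset m V S | w '' Set.Icc 1 s = ↑W}).ncard = cb s (S.erase s) := by
        intro W hW
        rw [Finset.mem_powersetCard] at hW
        have hdiff : (V \ W).card = m - s := by
          rw [Finset.card_sdiff_of_subset hW.1, hVc, hW.2]
        rw [Tset_ncard m s V W S hVc hW.1 hW.2 hsm hsS hmax hdiff]
        apply ih (S.erase s) s W _ hW.2
        · intro t ht
          rw [Finset.mem_erase] at ht
          have := hrange t ht.2
          have := hmax t ht.2
          constructor
          · omega
          · have : t ≠ s := ht.1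
            omega
        · rw [Finset.card_erase_of_mem hsS, hSc]; omega
      rw [Finset.sum_congr rfl hsum, Finset.sum_const, Finset.card_powersetCard, hVc,
        cb_nonempty m hne, ← hs, smul_eq_mul]
    · intro W _
      exact Set.Finite.subset (OKset_finite m V S) (fun w hw => hw.1)
    · intro W₁ h₁ W₂ h₂ hne12
      rw [Set.disjoint_left]
      rintro w ⟨_, hw1⟩ ⟨_, hw2⟩
      exact hne12 (Finset.coe_injective (hw1 ▸ hw2))

lemma invertsum {R : Type*} [CommRing R] (D : Finset ℕ) (f g : Finset ℕ → R)
    (h : ∀ T ∈ D.powerset, g T = ∑ T' ∈ T.powerset, f T') :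
    f D = ∑ T ∈ D.powerset, (-1 : R) ^ (D.card - T.card) * g T := by
  classical
  have step1 : ∑ T ∈ D.powerset, (-1 : R) ^ (D.card - T.card) * g T
      = ∑ T ∈ D.powerset, ∑ T' ∈ T.powerset, (-1 : R) ^ (D.card - T.card) * f T' := by
    refine Finset.sum_congr rfl (fun T hT => ?_)
    rw [h T hT, Finset.mul_sum]
  rw [step1]
  rw [Finset.sum_comm' (s' := fun T' => D.powerset.filter (fun T => T' ⊆ T))
    (t' := D.powerset) (by
      intro T T'
      simp only [Finset.mem_powerset, Finset.mem_filter, Finset.mem_powerset]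
      constructor
      · rintro ⟨h1, h2⟩; exact ⟨⟨h1, h2⟩, h2.trans h1⟩
      · rintro ⟨⟨h1, h2⟩, _⟩; exact ⟨h1, h2⟩)]
  have inner : ∀ T' ∈ D.powerset,
      ∑ T ∈ D.powerset.filter (fun T => T' ⊆ T), (-1 : R) ^ (D.card - T.card) * f T'
      = (if T' = D then (1 : R) else 0) * f T' := by
    intro T' hT'
    rw [Finset.mem_powerset] at hT'
    rw [← Finset.sum_mul]
    congr 1
    have hbij : ∑ T ∈ D.powerset.filter (fun T => T' ⊆ T), (-1 : R) ^ (D.card - T.card)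
        = ∑ U ∈ (D \ T').powerset, (-1 : R) ^ ((D \ T').card - U.card) := by
      apply Finset.sum_bij' (i := fun T _ => T \ T') (j := fun U _ => T' ∪ U)
      · intro T hT
        rw [Finset.mem_filter, Finset.mem_powerset] at hT
        rw [Finset.mem_powerset]
        exact Finset.sdiff_subset_sdiff hT.1 (le_refl T')
      · intro U hU
        rw [Finset.mem_powerset] at hU
        rw [Finset.mem_filter, Finset.mem_powerset]
        exact ⟨Finset.union_subset hT' (hU.trans Finset.sdiff_subset), Finset.subset_union_left⟩
      · intro T hT
        rw [Finset.mem_filter, Finset.mem_powerset] at hT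
        exact Finset.union_sdiff_of_subset hT.2
      · intro U hU
        rw [Finset.mem_powerset] at hU
        apply Finset.union_sdiff_cancel_left
        exact Finset.disjoint_left.mpr (fun x hx1 hx2 =>
          (Finset.mem_sdiff.mp (hU hx2)).2 hx1)
      · intro T hT
        rw [Finset.mem_filter, Finset.mem_powerset] at hT
        congr 1
        have h1 := Finset.card_le_card hT.1
        have h2 := Finset.card_le_card hT.2
        rw [Finset.card_sdiff_of_subset hT.2, Finset.card_sdiff_of_subset (hT.2.trans hT.1)]
        omega
    rw [hbij]
    set E := D \ T' with hEdef
    have hterm : ∀ U ∈ E.powerset, (-1 : R) ^ (E.card - U.card)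
        = (-1 : R) ^ E.card * (-1 : R) ^ U.card := by
      intro U hU
      rw [Finset.mem_powerset] at hU
      have hle := Finset.card_le_card hU
      rw [← pow_add]
      have he : E.card + U.card = (E.card - U.card) + 2 * U.card := by omega
      rw [he, pow_add, pow_mul, neg_one_sq, one_pow, mul_one]
    rw [Finset.sum_congr rfl hterm, ← Finset.mul_sum]
    have hcast : ∑ U ∈ E.powerset, (-1 : R) ^ U.card
        = ((∑ U ∈ E.powerset, (-1 : ℤ) ^ U.card : ℤ) : R) := by push_cast; rfl
    rw [hcast, Finset.sum_powerset_neg_one_pow_card]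
    by_cases hED : T' = D
    · have : E = ∅ := by rw [hEdef, hED]; simp
      rw [if_pos hED, if_pos this, this]
      simp
    · have : E ≠ ∅ := by
        rw [hEdef, Ne, Finset.sdiff_eq_empty_iff_subset]
        intro hsub
        exact hED (Finset.Subset.antisymm hT' hsub)
      rw [if_neg hED, if_neg this]
      simp
  rw [Finset.sum_congr rfl inner]
  simp only [ite_mul, one_mul, zero_mul]
  rw [Finset.sum_ite_eq' D.powerset D f, if_pos (Finset.mem_powerset_self D)]
lemma OK_eq_perms (n : ℕ) (T : Finset ℕ) :
    OKset n (Finset.Icc 1 n) T = {w ∈ PermsA n | DesA n w ⊆ ↑T} := by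
  have hcoe : (↑(Finset.Icc 1 n) : Set ℕ) = Set.Icc 1 n := Finset.coe_Icc 1 n
  ext w
  constructor
  · rintro ⟨hbij, hfix, hmono⟩
    rw [hcoe] at hbij
    refine ⟨⟨hbij, hfix⟩, ?_⟩
    rintro i ⟨h1, h2, h3⟩
    by_contra hiT
    exact absurd h3 (not_lt_of_gt (hmono i h1 h2 (fun hm => hiT (by exact_mod_cast hm))))
  · rintro ⟨⟨hbij, hfix⟩, hdes⟩
    refine ⟨by rw [hcoe]; exact hbij, hfix, ?_⟩
    intro i h1 h2 hiT
    have hne : w i ≠ w (i + 1) := by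
      intro he
      have := hbij.injOn (show i ∈ Set.Icc 1 n by simp [Set.mem_Icc]; omega)
        (show i + 1 ∈ Set.Icc 1 n by simp [Set.mem_Icc]; omega) he
      omega
    rcases Nat.lt_or_ge (w i) (w (i+1)) with h | h
    · exact h
    · exfalso
      have : i ∈ DesA n w := ⟨h1, h2, by omega⟩
      exact hiT (by exact_mod_cast hdes this)

lemma permsA_finite (n : ℕ) : (PermsA n).Finite := by
  apply Set.Finite.subset (OKset_finite n (Finset.Icc 1 n) (Finset.Ioo 0 n))
  rintro w ⟨hbij, hfix⟩
  refine ⟨by rw [Finset.coe_Icc]; exact hbij, hfix, ?_⟩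
  intro i h1 h2 hmem
  exact absurd (Finset.mem_Ioo.mpr ⟨by omega, h2⟩) hmem

lemma B_sum (n : ℕ) (T : Finset ℕ) :
    (OKset n (Finset.Icc 1 n) T).ncard
      = ∑ T' ∈ T.powerset, ({w ∈ PermsA n | DesA n w = ↑T'}).ncard := by
  classical
  rw [OK_eq_perms]
  have hpart : {w ∈ PermsA n | DesA n w ⊆ ↑T}
      = ⋃ T' ∈ T.powerset, {w ∈ PermsA n | DesA n w = ↑T'} := by
    ext w
    simp only [Set.mem_iUnion, exists_prop, Set.mem_setOf_eq]
    constructor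
    · rintro ⟨hw, hdes⟩
      refine ⟨T.filter (fun t => t ∈ DesA n w), Finset.mem_powerset.mpr
        (Finset.filter_subset _ _), hw, ?_⟩
      ext t
      constructor
      · intro ht
        exact Finset.mem_coe.mpr (Finset.mem_filter.mpr ⟨by exact_mod_cast hdes ht, ht⟩)
      · intro ht
        exact (Finset.mem_filter.mp (Finset.mem_coe.mp ht)).2
    · rintro ⟨T', hT', hw, hdes⟩
      rw [Finset.mem_powerset] at hT'
      exact ⟨hw, by rw [hdes]; exact_mod_cast hT'⟩
  rw [hpart, ncard_biUnion_finset]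
  · intro T' _
    exact Set.Finite.subset (permsA_finite n) (fun w hw => hw.1)
  · intro T₁ h₁ T₂ h₂ hne
    rw [Set.disjoint_left]
    rintro w ⟨_, hw1⟩ ⟨_, hw2⟩
    exact hne (Finset.coe_injective (hw1 ▸ hw2))

lemma cb_singleton (m t : ℕ) : cb m {t} = m.choose t := by
  rw [cb_nonempty m (Finset.singleton_nonempty t)]
  simp [Finset.max'_singleton, Finset.erase_singleton, cb_empty]

/-- Let p be prime and n = u + v a sum of two distinct powers of p.  For a composition α
of n: r_α ≡ (-1)^{ℓ(α)} (mod p) if u, v ∈ D(α); r_α ≡ (-1)^{ℓ(α)-1} (mod p) if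
u, v ∉ D(α); and r_α ≡ 0 (mod p) otherwise. -/
theorem ribbonA_mod_p_sum_two_pows {p n u v a b : ℕ}
    (hp : p.Prime) (hu : u = p ^ a) (hv : v = p ^ b) (hab : a ≠ b) (hn : n = u + v)
    (α : Composition n) :
    (u ∈ DsetA α ∧ v ∈ DsetA α →
      (ribbonA α : ℤ) ≡ (-1) ^ α.length [ZMOD (p : ℤ)]) ∧
    (u ∉ DsetA α ∧ v ∉ DsetA α →
      (ribbonA α : ℤ) ≡ (-1) ^ (α.length - 1) [ZMOD (p : ℤ)]) ∧
    (¬(u ∈ DsetA α ↔ v ∈ DsetA α) →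
      (ribbonA α : ℤ) ≡ 0 [ZMOD (p : ℤ)]) := by
  classical
  have hp2 := hp.two_le
  have hune : u ≠ v := by
    rw [hu, hv]; exact fun h => hab (Nat.pow_right_injective hp2 h)
  have hu1 : 1 ≤ u := by rw [hu]; exact Nat.one_le_pow _ _ hp.pos
  have hv1 : 1 ≤ v := by rw [hv]; exact Nat.one_le_pow _ _ hp.pos
  have hn3 : 0 < n := by omega
  set ℓ := α.length with hℓ
  have hℓpos : 0 < ℓ := α.length_pos_of_pos hn3
  set D : Finset ℕ := Finset.image α.sizeUpTo (Finset.Ioo 0 ℓ) with hD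
  have hmono : ∀ i j, i < j → j ≤ ℓ → α.sizeUpTo i < α.sizeUpTo j := by
    intro i j
    induction j with
    | zero => omega
    | succ j ih =>
      intro hij hj
      have hstep : α.sizeUpTo j < α.sizeUpTo (j + 1) := α.sizeUpTo_strict_mono (by omega)
      rcases Nat.lt_or_ge i j with h | h
      · exact lt_trans (ih h (by omega)) hstep
      · have : i = j := by omega
        rw [this]; exact hstep
  have hDcoe : (↑D : Set ℕ) = DsetA α := by
    ext m
    simp only [hD, Finset.coe_image, Finset.coe_Ioo, Set.mem_image, Set.mem_Ioo, DsetA,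
      Set.mem_setOf_eq]
    constructor
    · rintro ⟨i, ⟨h1, h2⟩, rfl⟩; exact ⟨i, h1, h2, rfl⟩
    · rintro ⟨i, h1, h2, rfl⟩; exact ⟨i, ⟨h1, h2⟩, rfl⟩
  have hDrange : ∀ t ∈ D, 0 < t ∧ t < n := by
    intro t ht
    rw [hD, Finset.mem_image] at ht
    obtain ⟨i, hi, rfl⟩ := ht
    rw [Finset.mem_Ioo] at hi
    constructor
    · have := hmono 0 i hi.1 (by omega)
      rwa [α.sizeUpTo_zero] at this
    · have := hmono i ℓ hi.2 (le_refl ℓ)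
      rwa [α.sizeUpTo_length] at this
  have hDcard : D.card = ℓ - 1 := by
    have hinj : Set.InjOn α.sizeUpTo ↑(Finset.Ioo 0 ℓ) := by
      intro i hi j hj he
      rw [Finset.coe_Ioo, Set.mem_Ioo] at hi hj
      by_contra hne
      rcases Nat.lt_or_ge i j with h | h
      · exact absurd he (Nat.ne_of_lt (hmono i j h (by omega)))
      · exact absurd he.symm (Nat.ne_of_lt (hmono j i (by omega) (by omega)))
    rw [hD, Finset.card_image_of_injOn hinj, Nat.card_Ioo]
    omega
  have hmemu : u ∈ DsetA α ↔ u ∈ D := by rw [← hDcoe]; exact Iff.rfl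
  have hmemv : v ∈ DsetA α ↔ v ∈ D := by rw [← hDcoe]; exact Iff.rfl
  have hIcc : (Finset.Icc 1 n).card = n := by rw [Nat.card_Icc]; omega
  have hBR : ∀ T ∈ D.powerset, ((cb n T : ZMod p))
      = ∑ T' ∈ T.powerset, (({w ∈ PermsA n | DesA n w = ↑T'}).ncard : ZMod p) := by
    intro T hT
    rw [Finset.mem_powerset] at hT
    have h1 : (OKset n (Finset.Icc 1 n) T).ncard = cb n T :=
      okCount T.card T n (Finset.Icc 1 n) rfl hIcc (fun t ht => hDrange t (hT ht))
    rw [← h1, B_sum n T, Nat.cast_sum]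
  have hmain := invertsum (R := ZMod p) D
    (fun T' => (({w ∈ PermsA n | DesA n w = ↑T'}).ncard : ZMod p))
    (fun T => (cb n T : ZMod p)) hBR
  have hribD : (ribbonA α : ZMod p)
      = ∑ T ∈ D.powerset, (-1 : ZMod p) ^ (D.card - T.card) * (cb n T : ZMod p) := by
    have hset : {w ∈ PermsA n | DesA n w = DsetA α} = {w ∈ PermsA n | DesA n w = ↑D} := by
      rw [hDcoe]
    rw [ribbonA, hset]
    exact hmain
  set K : Finset (Finset ℕ) := {∅, {u}, {v}} with hK
  have hcbK : ∀ T ∈ D.powerset, T ∉ K → (cb n T : ZMod p) = 0 := by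
    intro T hTp hTK
    rw [Finset.mem_powerset] at hTp
    simp only [hK, Finset.mem_insert, Finset.mem_singleton] at hTK
    push_neg at hTK
    obtain ⟨hT0, hTu, hTv⟩ := hTK
    have hrange : ∀ t ∈ T, 0 < t ∧ t < n := fun t ht => hDrange t (hTp ht)
    have hne : T.Nonempty := hT0
    set t := T.max' hne with ht
    have htT : t ∈ T := T.max'_mem hne
    by_cases htuv : t = u ∨ t = v
    · have herase : (T.erase t).Nonempty := by
        rw [Finset.nonempty_iff_ne_empty]
        intro h
        rcases (Finset.erase_eq_empty_iff T t).mp h with h' | h'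
        · exact Finset.nonempty_iff_ne_empty.mp hT0 h'
        · rcases htuv with h2 | h2
          · exact hTu (by rw [h', h2])
          · exact hTv (by rw [h', h2])
      set t₂ := (T.erase t).max' herase with ht₂
      have ht₂m : t₂ ∈ T.erase t := Finset.max'_mem _ _
      have ht₂T : t₂ ∈ T := Finset.mem_of_mem_erase ht₂m
      have ht₂lt : t₂ < t :=
        lt_of_le_of_ne (T.le_max' t₂ ht₂T) (Finset.mem_erase.mp ht₂m).1
      rw [cb_nonempty n hne, ← ht, cb_nonempty t herase, ← ht₂]
      push_cast
      have hmid : ((t.choose t₂ : ℕ) : ZMod p) = 0 := by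
        rcases htuv with h2 | h2
        · rw [h2, hu]
          exact choosePowZero hp a t₂ (by have := hrange t₂ ht₂T; omega)
            (by rw [← hu]; omega)
        · rw [h2, hv]
          exact choosePowZero hp b t₂ (by have := hrange t₂ ht₂T; omega)
            (by rw [← hv]; omega)
      rw [hmid]
      ring
    · push_neg at htuv
      rw [cb_nonempty n hne, ← ht]
      push_cast
      have hz : ((n.choose t : ℕ) : ZMod p) = 0 := by
        rw [hn, hu, hv]
        apply chooseSumZero hp
        · have := hrange t htT; omega
        · rw [← hu]; exact htuv.1
        · rw [← hv]; exact htuv.2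
        · rw [← hu, ← hv, ← hn]; have := hrange t htT; omega
      rw [hz]
      ring
  have hsum : (ribbonA α : ZMod p)
      = ∑ T ∈ D.powerset.filter (· ∈ K), (-1 : ZMod p) ^ (D.card - T.card) * (cb n T : ZMod p) := by
    rw [hribD]
    exact (Finset.sum_subset (Finset.filter_subset _ _) (fun T hT hT2 => by
      have hnk : T ∉ K := fun hk => hT2 (Finset.mem_filter.mpr ⟨hT, hk⟩)
      rw [hcbK T hT hnk, mul_zero])).symm
  have hcb0 : ((cb n ∅ : ℕ) : ZMod p) = 1 := by rw [cb_empty]; push_cast; rfl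
  have hcbu : ((cb n {u} : ℕ) : ZMod p) = 1 := by
    rw [cb_singleton]
    have he : n.choose u = (p ^ a + p ^ b).choose (p ^ a) := by rw [hn, hu, hv]
    rw [he]
    exact chooseSumOne hp hab
  have hcbv : ((cb n {v} : ℕ) : ZMod p) = 1 := by
    rw [cb_singleton]
    have he : n.choose v = (p ^ b + p ^ a).choose (p ^ b) := by
      rw [hn, hu, hv, Nat.add_comm]
    rw [he]
    exact chooseSumOne hp (Ne.symm hab)
  have transfer : ∀ z : ℤ, (ribbonA α : ZMod p) = (z : ZMod p) →
      (ribbonA α : ℤ) ≡ z [ZMOD (p : ℤ)] := by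
    intro z hz
    have h := (ZMod.intCast_eq_intCast_iff ((ribbonA α : ℕ) : ℤ) z p).mp (by push_cast; exact hz)
    exact h
  refine ⟨?_, ?_, ?_⟩
  · rintro ⟨hu', hv'⟩
    rw [hmemu] at hu'
    rw [hmemv] at hv'
    have hd1 : 1 ≤ D.card := Finset.card_pos.mpr ⟨u, hu'⟩
    apply transfer
    have hP : D.powerset.filter (· ∈ K) = {∅, {u}, {v}} := by
      ext T
      simp only [Finset.mem_filter, Finset.mem_powerset, hK, Finset.mem_insert,
        Finset.mem_singleton]
      constructor
      · tauto
      · rintro (rfl | rfl | rfl)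
        · exact ⟨Finset.empty_subset D, Or.inl rfl⟩
        · exact ⟨Finset.singleton_subset_iff.mpr hu', Or.inr (Or.inl rfl)⟩
        · exact ⟨Finset.singleton_subset_iff.mpr hv', Or.inr (Or.inr rfl)⟩
    have h1 : (∅ : Finset ℕ) ∉ ({{u}, {v}} : Finset (Finset ℕ)) := by
      simp only [Finset.mem_insert, Finset.mem_singleton]
      push_neg
      exact ⟨(Finset.singleton_ne_empty u).symm, (Finset.singleton_ne_empty v).symm⟩
    have h2 : ({u} : Finset ℕ) ∉ ({{v}} : Finset (Finset ℕ)) := by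
      simp only [Finset.mem_singleton]
      exact fun h => hune (Finset.singleton_inj.mp h)
    rw [hsum, hP, Finset.sum_insert h1, Finset.sum_insert h2, Finset.sum_singleton]
    rw [hcb0, hcbu, hcbv]
    simp only [Finset.card_empty, Finset.card_singleton, Nat.sub_zero, mul_one]
    obtain ⟨e, he⟩ : ∃ e, D.card = e + 1 := ⟨D.card - 1, by omega⟩
    have hℓe : ℓ = e + 2 := by omega
    rw [he, hℓe]
    push_cast
    simp only [Nat.add_sub_cancel, pow_succ]
    ring
  · rintro ⟨hu', hv'⟩
    rw [hmemu] at hu'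
    rw [hmemv] at hv'
    apply transfer
    have hP : D.powerset.filter (· ∈ K) = {∅} := by
      ext T
      simp only [Finset.mem_filter, Finset.mem_powerset, hK, Finset.mem_insert,
        Finset.mem_singleton]
      constructor
      · rintro ⟨hsub, rfl | rfl | rfl⟩
        · rfl
        · exact absurd (hsub (Finset.mem_singleton_self u)) hu'
        · exact absurd (hsub (Finset.mem_singleton_self v)) hv'
      · rintro rfl
        exact ⟨Finset.empty_subset D, Or.inl rfl⟩
    rw [hsum, hP, Finset.sum_singleton, hcb0]
    simp only [Finset.card_empty, Nat.sub_zero, mul_one]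
    rw [hDcard]
    push_cast
    rfl
  · intro hxor
    apply transfer
    have hcases : (u ∈ D ∧ v ∉ D) ∨ (v ∈ D ∧ u ∉ D) := by
      rw [hmemu, hmemv] at hxor
      by_cases h1 : u ∈ D <;> by_cases h2 : v ∈ D <;> tauto
    rcases hcases with ⟨hx, hy⟩ | ⟨hx, hy⟩
    · have hd1 : 1 ≤ D.card := Finset.card_pos.mpr ⟨u, hx⟩
      have hP : D.powerset.filter (· ∈ K) = {∅, {u}} := by
        ext T
        simp only [Finset.mem_filter, Finset.mem_powerset, hK, Finset.mem_insert,
          Finset.mem_singleton]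
        constructor
        · rintro ⟨hsub, rfl | rfl | rfl⟩
          · exact Or.inl rfl
          · exact Or.inr rfl
          · exact absurd (hsub (Finset.mem_singleton_self v)) hy
        · rintro (rfl | rfl)
          · exact ⟨Finset.empty_subset D, Or.inl rfl⟩
          · exact ⟨Finset.singleton_subset_iff.mpr hx, Or.inr (Or.inl rfl)⟩
      have h1 : (∅ : Finset ℕ) ∉ ({{u}} : Finset (Finset ℕ)) := by
        simp only [Finset.mem_singleton]
        exact (Finset.singleton_ne_empty u).symm
      rw [hsum, hP, Finset.sum_insert h1, Finset.sum_singleton, hcb0, hcbu]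
      simp only [Finset.card_empty, Finset.card_singleton, Nat.sub_zero, mul_one]
      obtain ⟨e, he⟩ : ∃ e, D.card = e + 1 := ⟨D.card - 1, by omega⟩
      rw [he]
      push_cast
      simp only [Nat.add_sub_cancel, pow_succ]
      ring
    · have hd1 : 1 ≤ D.card := Finset.card_pos.mpr ⟨v, hx⟩
      have hP : D.powerset.filter (· ∈ K) = {∅, {v}} := by
        ext T
        simp only [Finset.mem_filter, Finset.mem_powerset, hK, Finset.mem_insert,
          Finset.mem_singleton]
        constructor
        · rintro ⟨hsub, rfl | rfl | rfl⟩
          · exact Or.inl rfl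
          · exact absurd (hsub (Finset.mem_singleton_self u)) hy
          · exact Or.inr rfl
        · rintro (rfl | rfl)
          · exact ⟨Finset.empty_subset D, Or.inl rfl⟩
          · exact ⟨Finset.singleton_subset_iff.mpr hx, Or.inr (Or.inr rfl)⟩
      have h1 : (∅ : Finset ℕ) ∉ ({{v}} : Finset (Finset ℕ)) := by
        simp only [Finset.mem_singleton]
        exact (Finset.singleton_ne_empty v).symm
      rw [hsum, hP, Finset.sum_insert h1, Finset.sum_singleton, hcb0, hcbv]
      simp only [Finset.card_empty, Finset.card_singleton, Nat.sub_zero, mul_one]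
      obtain ⟨e, he⟩ : ∃ e, D.card = e + 1 := ⟨D.card - 1, by omega⟩
      rw [he]
      push_cast
      simp only [Nat.add_sub_cancel, pow_succ]
      ring
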